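/- Fix p ∈ ℕ and a finite state space S of configurations ξ : {1,…,p} → ℕ with fixed total particle number. Let π(ξ) = Π_i ℒ(ξ(i)) with ℒ(k) = Π_{i=1}^k (1 − 1/(2i)), and for a symmetric matrix (c_{kl}) with c_{kk} = 0 define the generator (Bf)(ξ) = Σ_{k≠l} c_{kl} · ξ(k)(1 + 2ξ(l)) · (f(ξ^{k→l}) − f(ξ)). Then for all functions f, g : S → ℝ: Σ_ξ π(ξ) g(ξ) (Bf)(ξ) = Σ_ξ π(ξ) f(ξ) (Bg)(ξ); i.e., π is reversible for B. Moreover, −Σ_ξ π(ξ) f(ξ)(Bf)(ξ) = (1/2) Σ_ξ π(ξ) Σ_{k≠l} c_{kl} ξ(k)(1+2ξ(l)) (f(ξ^{k→l}) − f(ξ))². -/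
import Mathlib


open Finset

/-- The weight of a single site: `ℒ(k) = ∏_{i=1}^k (1 - 1/(2i))`. -/
noncomputable def siteWeight (k : ℕ) : ℝ :=
  ∏ i ∈ Finset.range k, (1 - 1 / (2 * ((i : ℝ) + 1)))

/-- The measure on configurations: `π(ξ) = ∏ᵢ ℒ(ξ(i))`. -/
noncomputable def configWeight {p : ℕ} (ξ : Fin p → ℕ) : ℝ :=
  ∏ i, siteWeight (ξ i)

/-- `ξ^{k→l}`: move one particle from site `k` to site `l`. -/
def move {p : ℕ} (ξ : Fin p → ℕ) (k l : Fin p) : Fin p → ℕ :=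
  Function.update (Function.update ξ k (ξ k - 1)) l (ξ l + 1)

/-- The eigenvector moment flow generator
`(Bf)(ξ) = ∑_{k≠l} c_{kl} ξ(k)(1 + 2ξ(l)) (f(ξ^{k→l}) - f(ξ))`. -/
noncomputable def gen {p : ℕ} (c : Fin p → Fin p → ℝ)
    (f : (Fin p → ℕ) → ℝ) (ξ : Fin p → ℕ) : ℝ :=
  ∑ k, ∑ l, if k = l then 0 else
    c k l * (ξ k : ℝ) * (1 + 2 * (ξ l : ℝ)) * (f (move ξ k l) - f ξ)

lemma siteWeight_pos (k : ℕ) : 0 < siteWeight k := by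
  apply Finset.prod_pos
  intro i _
  have h1 : (0:ℝ) < 2 * ((i:ℝ) + 1) := by positivity
  have h2 : (1:ℝ) / (2 * ((i:ℝ) + 1)) < 1 := by
    rw [div_lt_one h1]; nlinarith [Nat.cast_nonneg (α := ℝ) i]
  linarith

lemma siteWeight_succ (n : ℕ) :
    siteWeight (n + 1) = siteWeight n * (1 - 1 / (2 * ((n : ℝ) + 1))) := by
  rw [siteWeight, Finset.prod_range_succ, siteWeight]

lemma move_apply_k {p : ℕ} (ξ : Fin p → ℕ) {k l : Fin p} (hkl : k ≠ l) :
    move ξ k l k = ξ k - 1 := by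
  simp [move, Function.update_apply, hkl]

lemma move_apply_l {p : ℕ} (ξ : Fin p → ℕ) (k l : Fin p) :
    move ξ k l l = ξ l + 1 := by
  simp [move, Function.update_apply]

lemma move_apply_other {p : ℕ} (ξ : Fin p → ℕ) {k l i : Fin p} (hik : i ≠ k) (hil : i ≠ l) :
    move ξ k l i = ξ i := by
  simp [move, Function.update_apply, hik, hil]

lemma move_move {p : ℕ} (ξ : Fin p → ℕ) {k l : Fin p} (hkl : k ≠ l) (hk : 1 ≤ ξ k) :
    move (move ξ k l) l k = ξ := by
  funext i
  by_cases hik : i = k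
  · subst hik
    rw [move_apply_l (move ξ i l) l i, move_apply_k ξ hkl]
    omega
  · by_cases hil : i = l
    · subst hil
      rw [move_apply_k (move ξ k i) (Ne.symm hkl), move_apply_l]
      omega
    · rw [move_apply_other (move ξ k l) hil hik, move_apply_other ξ hik hil]

lemma sum_move {p : ℕ} (ξ : Fin p → ℕ) {k l : Fin p} (hkl : k ≠ l) (hk : 1 ≤ ξ k) :
    ∑ i, move ξ k l i = ∑ i, ξ i := by
  have hkm : k ∈ (Finset.univ : Finset (Fin p)) \ {l} := by
    simp [hkl]
  rw [move, Finset.sum_update_of_mem (Finset.mem_univ l),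
    Finset.sum_update_of_mem hkm,
    Finset.sum_eq_add_sum_sdiff_singleton_of_mem (Finset.mem_univ l) ξ,
    Finset.sum_eq_add_sum_sdiff_singleton_of_mem hkm ξ]
  omega

lemma configWeight_move {p : ℕ} (ξ : Fin p → ℕ) {k l : Fin p} (hkl : k ≠ l) :
    configWeight (move ξ k l) * (siteWeight (ξ k) * siteWeight (ξ l))
      = configWeight ξ * (siteWeight (ξ k - 1) * siteWeight (ξ l + 1)) := by
  classical
  have hkm : k ∈ (Finset.univ : Finset (Fin p)) \ {l} := by simp [hkl]
  have e1 : configWeight (move ξ k l)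
      = siteWeight (ξ l + 1) * (siteWeight (ξ k - 1) * ∏ i ∈ (Finset.univ \ {l}) \ {k}, siteWeight (ξ i)) := by
    rw [configWeight]
    have : ∀ i, siteWeight (move ξ k l i)
        = Function.update (Function.update (fun j => siteWeight (ξ j)) k (siteWeight (ξ k - 1))) l (siteWeight (ξ l + 1)) i := by
      intro i
      rw [move]
      rw [Function.apply_update (fun _ n => siteWeight n) (Function.update ξ k (ξ k - 1)) l (ξ l + 1) i]
      congr 1
      funext j
      exact Function.apply_update (fun _ n => siteWeight n) ξ k (ξ k - 1) j
    rw [Finset.prod_congr rfl (fun i _ => this i),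
      Finset.prod_update_of_mem (Finset.mem_univ l),
      Finset.prod_update_of_mem hkm]
  have e2 : configWeight ξ
      = siteWeight (ξ l) * (siteWeight (ξ k) * ∏ i ∈ (Finset.univ \ {l}) \ {k}, siteWeight (ξ i)) := by
    rw [configWeight, Finset.prod_eq_mul_prod_sdiff_singleton_of_mem (Finset.mem_univ l),
      Finset.prod_eq_mul_prod_sdiff_singleton_of_mem hkm]
  rw [e1, e2]; ring

lemma detailed_balance {p : ℕ} (ξ : Fin p → ℕ) {k l : Fin p} (hkl : k ≠ l) (hk : 1 ≤ ξ k) :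
    configWeight (move ξ k l) * ((move ξ k l l : ℝ)) * (1 + 2 * ((move ξ k l k : ℝ)))
      = configWeight ξ * (ξ k : ℝ) * (1 + 2 * (ξ l : ℝ)) := by
  obtain ⟨a, ha⟩ : ∃ a, ξ k = a + 1 := ⟨ξ k - 1, by omega⟩
  have hE := configWeight_move ξ hkl
  rw [ha] at hE
  simp only [Nat.add_sub_cancel] at hE
  rw [move_apply_l, move_apply_k ξ hkl, ha]
  simp only [Nat.add_sub_cancel]
  push_cast
  set b := ξ l with hb
  -- multiply goal by siteWeight (a+1) * siteWeight b (positive)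
  have hpos : (0:ℝ) < siteWeight (a+1) * siteWeight b :=
    mul_pos (siteWeight_pos _) (siteWeight_pos _)
  have hne : siteWeight (a+1) * siteWeight b ≠ 0 := ne_of_gt hpos
  have key : ∀ n : ℕ, (1 - 1/(2*((n:ℝ)+1)))*((n:ℝ)+1) = (n:ℝ) + 1/2 := by
    intro n
    have h1 : ((n:ℝ)+1) ≠ 0 := by positivity
    field_simp
    ring
  refine mul_right_cancel₀ hne ?_
  rw [siteWeight_succ a] at hE ⊢
  rw [siteWeight_succ b] at hE
  linear_combination (((b:ℝ)+1)*(1+2*(a:ℝ)))*hE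
    + configWeight ξ * siteWeight a * siteWeight b * (1+2*(a:ℝ)) * key b
    - configWeight ξ * siteWeight a * siteWeight b * (1+2*(b:ℝ)) * key a

noncomputable def Tsum {p : ℕ} (c : Fin p → Fin p → ℝ) (L : ℕ)
    (F : (Fin p → ℕ) → Fin p → Fin p → ℝ) : ℝ :=
  ∑ ξ ∈ Finset.Nat.antidiagonalTuple p L, ∑ k, ∑ l,
    if k = l then 0 else
      configWeight ξ * (c k l * (ξ k : ℝ) * (1 + 2 * (ξ l : ℝ))) * F ξ k l

lemma Tsum_as_filter {p : ℕ} (c : Fin p → Fin p → ℝ) (L : ℕ)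
    (F : (Fin p → ℕ) → Fin p → Fin p → ℝ) :
    Tsum c L F = ∑ t ∈ ((Finset.Nat.antidiagonalTuple p L) ×ˢ (Finset.univ ×ˢ Finset.univ)).filter
        (fun t => t.2.1 ≠ t.2.2 ∧ 1 ≤ t.1 t.2.1),
      configWeight t.1 * (c t.2.1 t.2.2 * (t.1 t.2.1 : ℝ) * (1 + 2 * (t.1 t.2.2 : ℝ))) * F t.1 t.2.1 t.2.2 := by
  classical
  rw [Tsum]
  rw [show (∑ ξ ∈ Finset.Nat.antidiagonalTuple p L, ∑ k, ∑ l,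
      if k = l then 0 else
        configWeight ξ * (c k l * (ξ k : ℝ) * (1 + 2 * (ξ l : ℝ))) * F ξ k l)
    = ∑ t ∈ (Finset.Nat.antidiagonalTuple p L) ×ˢ (Finset.univ ×ˢ Finset.univ),
        (if t.2.1 = t.2.2 then 0 else
          configWeight t.1 * (c t.2.1 t.2.2 * (t.1 t.2.1 : ℝ) * (1 + 2 * (t.1 t.2.2 : ℝ))) * F t.1 t.2.1 t.2.2)
    from by rw [Finset.sum_product]; exact Finset.sum_congr rfl fun ξ _ => by rw [Finset.sum_product]]
  rw [← Finset.sum_filter_of_ne (p := fun t => t.2.1 ≠ t.2.2 ∧ 1 ≤ t.1 t.2.1)]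
  · refine Finset.sum_congr rfl fun t ht => ?_
    rw [Finset.mem_filter] at ht
    rw [if_neg ht.2.1]
  · rintro ⟨ξ, k, l⟩ _ hne
    by_cases hkl : k = l
    · simp [hkl] at hne
    · by_cases hk : 1 ≤ ξ k
      · exact ⟨hkl, hk⟩
      · exfalso
        apply hne
        have h1 : ξ k = 0 := Nat.eq_zero_of_not_pos hk
        simp [hkl, h1]

lemma Tsum_invol {p : ℕ} (c : Fin p → Fin p → ℝ) (L : ℕ)
    (hsymm : ∀ k l, c k l = c l k)
    (G : (Fin p → ℕ) → (Fin p → ℕ) → ℝ) :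
    Tsum c L (fun ξ k l => G ξ (move ξ k l)) = Tsum c L (fun ξ k l => G (move ξ k l) ξ) := by
  classical
  rw [Tsum_as_filter, Tsum_as_filter]
  refine Finset.sum_nbij' (fun t => (move t.1 t.2.1 t.2.2, t.2.2, t.2.1))
    (fun t => (move t.1 t.2.1 t.2.2, t.2.2, t.2.1)) ?_ ?_ ?_ ?_ ?_
  · rintro ⟨ξ, k, l⟩ ht
    rw [Finset.mem_filter] at ht ⊢
    obtain ⟨hmem, hkl, hk⟩ := ht
    simp only [Finset.mem_product, Finset.mem_univ, and_true, true_and] at hmem ⊢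
    refine ⟨?_, Ne.symm hkl, ?_⟩
    · rw [Finset.Nat.mem_antidiagonalTuple] at hmem ⊢
      rw [sum_move ξ hkl hk]; exact hmem
    · rw [move_apply_l]; omega
  · rintro ⟨ξ, k, l⟩ ht
    rw [Finset.mem_filter] at ht ⊢
    obtain ⟨hmem, hkl, hk⟩ := ht
    simp only [Finset.mem_product, Finset.mem_univ, and_true, true_and] at hmem ⊢
    refine ⟨?_, Ne.symm hkl, ?_⟩
    · rw [Finset.Nat.mem_antidiagonalTuple] at hmem ⊢
      rw [sum_move ξ hkl hk]; exact hmem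
    · rw [move_apply_l]; omega
  · rintro ⟨ξ, k, l⟩ ht
    rw [Finset.mem_filter] at ht
    obtain ⟨_, hkl, hk⟩ := ht
    simp [move_move ξ hkl hk]
  · rintro ⟨ξ, k, l⟩ ht
    rw [Finset.mem_filter] at ht
    obtain ⟨_, hkl, hk⟩ := ht
    simp [move_move ξ hkl hk]
  · rintro ⟨ξ, k, l⟩ ht
    rw [Finset.mem_filter] at ht
    obtain ⟨_, hkl, hk⟩ := ht
    simp only
    rw [move_move ξ hkl hk, hsymm l k]
    have hdb := detailed_balance ξ hkl hk
    push_cast [move_apply_l, move_apply_k ξ hkl] at hdb ⊢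
    linear_combination (-(c k l * G ξ (move ξ k l))) * hdb

lemma Tsum_congr {p : ℕ} (c : Fin p → Fin p → ℝ) (L : ℕ)
    {F F' : (Fin p → ℕ) → Fin p → Fin p → ℝ}
    (h : ∀ ξ k l, F ξ k l = F' ξ k l) : Tsum c L F = Tsum c L F' := by
  refine Finset.sum_congr rfl fun ξ _ => Finset.sum_congr rfl fun k _ =>
    Finset.sum_congr rfl fun l _ => by rw [h]

lemma Tsum_sub {p : ℕ} (c : Fin p → Fin p → ℝ) (L : ℕ)
    (F F' : (Fin p → ℕ) → Fin p → Fin p → ℝ) :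
    Tsum c L (fun ξ k l => F ξ k l - F' ξ k l) = Tsum c L F - Tsum c L F' := by
  simp only [Tsum, ← Finset.sum_sub_distrib]
  refine Finset.sum_congr rfl fun ξ _ => Finset.sum_congr rfl fun k _ =>
    Finset.sum_congr rfl fun l _ => ?_
  split_ifs
  · ring
  · ring

lemma Tsum_add {p : ℕ} (c : Fin p → Fin p → ℝ) (L : ℕ)
    (F F' : (Fin p → ℕ) → Fin p → Fin p → ℝ) :
    Tsum c L (fun ξ k l => F ξ k l + F' ξ k l) = Tsum c L F + Tsum c L F' := by
  simp only [Tsum, ← Finset.sum_add_distrib]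
  refine Finset.sum_congr rfl fun ξ _ => Finset.sum_congr rfl fun k _ =>
    Finset.sum_congr rfl fun l _ => ?_
  split_ifs
  · ring
  · ring

lemma Tsum_smul {p : ℕ} (c : Fin p → Fin p → ℝ) (L : ℕ) (r : ℝ)
    (F : (Fin p → ℕ) → Fin p → Fin p → ℝ) :
    Tsum c L (fun ξ k l => r * F ξ k l) = r * Tsum c L F := by
  simp only [Tsum, Finset.mul_sum]
  refine Finset.sum_congr rfl fun ξ _ => Finset.sum_congr rfl fun k _ =>
    Finset.sum_congr rfl fun l _ => ?_
  split_ifs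
  · ring
  · ring

lemma expand {p : ℕ} (c : Fin p → Fin p → ℝ) (L : ℕ)
    (h f : (Fin p → ℕ) → ℝ) :
    ∑ ξ ∈ Finset.Nat.antidiagonalTuple p L, configWeight ξ * h ξ * gen c f ξ
      = Tsum c L (fun ξ k l => h ξ * (f (move ξ k l) - f ξ)) := by
  refine Finset.sum_congr rfl fun ξ _ => ?_
  rw [gen, Finset.mul_sum]
  refine Finset.sum_congr rfl fun k _ => ?_
  rw [Finset.mul_sum]
  refine Finset.sum_congr rfl fun l _ => ?_
  split_ifs
  · ring
  · ring

lemma expand2 {p : ℕ} (c : Fin p → Fin p → ℝ) (L : ℕ)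
    (f : (Fin p → ℕ) → ℝ) :
    ∑ ξ ∈ Finset.Nat.antidiagonalTuple p L, configWeight ξ *
        ∑ k, ∑ l, (if k = l then 0 else
          c k l * (ξ k : ℝ) * (1 + 2 * (ξ l : ℝ)) * (f (move ξ k l) - f ξ) ^ 2)
      = Tsum c L (fun ξ k l => (f (move ξ k l) - f ξ) ^ 2) := by
  refine Finset.sum_congr rfl fun ξ _ => ?_
  rw [Finset.mul_sum]
  refine Finset.sum_congr rfl fun k _ => ?_
  rw [Finset.mul_sum]
  refine Finset.sum_congr rfl fun l _ => ?_
  split_ifs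
  · ring
  · ring

/-- `π` is a reversible measure for the eigenvector moment flow generator `B` on the
state space of configurations with total particle number `L`, and the associated
Dirichlet form is `-∑_ξ π(ξ) f(ξ)(Bf)(ξ)
  = (1/2) ∑_ξ π(ξ) ∑_{k≠l} c_{kl} ξ(k)(1+2ξ(l)) (f(ξ^{k→l}) - f(ξ))²`. -/
theorem statement14 (p L : ℕ) (c : Fin p → Fin p → ℝ)
    (hsymm : ∀ k l, c k l = c l k) (hdiag : ∀ k, c k k = 0) :
    (∀ f g : (Fin p → ℕ) → ℝ,
      ∑ ξ ∈ Finset.Nat.antidiagonalTuple p L, configWeight ξ * g ξ * gen c f ξ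
        = ∑ ξ ∈ Finset.Nat.antidiagonalTuple p L, configWeight ξ * f ξ * gen c g ξ)
    ∧ (∀ f : (Fin p → ℕ) → ℝ,
      -∑ ξ ∈ Finset.Nat.antidiagonalTuple p L, configWeight ξ * f ξ * gen c f ξ
        = (1 / 2) * ∑ ξ ∈ Finset.Nat.antidiagonalTuple p L, configWeight ξ *
            ∑ k, ∑ l, if k = l then 0 else
              c k l * (ξ k : ℝ) * (1 + 2 * (ξ l : ℝ)) * (f (move ξ k l) - f ξ) ^ 2) := by
  constructor
  · intro f g
    rw [expand c L g f, expand c L f g]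
    have key := Tsum_invol c L hsymm (fun a b => g a * f b)
    have e1 : Tsum c L (fun ξ k l => g ξ * (f (move ξ k l) - f ξ))
        = Tsum c L (fun ξ k l => g ξ * f (move ξ k l)) - Tsum c L (fun ξ k l => g ξ * f ξ) := by
      rw [← Tsum_sub]
      exact Tsum_congr c L fun ξ k l => by ring
    have e2 : Tsum c L (fun ξ k l => f ξ * (g (move ξ k l) - g ξ))
        = Tsum c L (fun ξ k l => g (move ξ k l) * f ξ) - Tsum c L (fun ξ k l => g ξ * f ξ) := by
      rw [← Tsum_sub]
      exact Tsum_congr c L fun ξ k l => by ring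
    rw [e1, e2, key]
  · intro f
    rw [expand c L f f, expand2 c L f]
    have key := Tsum_invol c L hsymm (fun a b => (f b) ^ 2)
    have comb : Tsum c L (fun ξ k l => (f (move ξ k l) - f ξ) ^ 2 + 2 * (f ξ * (f (move ξ k l) - f ξ)))
        = Tsum c L (fun ξ k l => (f (move ξ k l)) ^ 2) - Tsum c L (fun ξ k l => (f ξ) ^ 2) := by
      rw [← Tsum_sub]
      exact Tsum_congr c L fun ξ k l => by ring
    rw [Tsum_add, Tsum_smul, key, sub_self] at comb
    linarith
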